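/- Let N ≥ 2, let ε ≥ 0, and let s*, s' : Fin N → ℝ satisfy |s*(j) − s*(k)| > 2ε for all j ≠ k and |s'(j) − s*(j)| ≤ ε for all j. Then for every injective reference score vector s : Fin N → ℝ, SROCC(s', s) = SROCC(s*, s), where SROCC(u, v) = 1 − (6 / (N(N² − 1))) · Σ_j (r(u)(j) − r(v)(j))² for injective u, v with descending rank vectors r(u), r(v). -/

import Mathlib

/-- Descending rank vector: `rankVec s j = 1 + #{k | s k > s j}`. -/
noncomputable def rankVec {N : ℕ} (s : Fin N → ℝ) : Fin N → ℝ :=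
  fun j => 1 + (Finset.univ.filter (fun k => s k > s j)).card

/-- Spearman's rank-order correlation coefficient between two score vectors,
computed from their descending rank vectors. -/
noncomputable def srocc {N : ℕ} (u v : Fin N → ℝ) : ℝ :=
  1 - 6 / (N * ((N : ℝ) ^ 2 - 1)) * ∑ j : Fin N, (rankVec u j - rankVec v j) ^ 2

/-! Rank vectors see only the strict order of the scores, and a perturbation by at most `ε` in
each coordinate cannot reverse the order of two scores that are more than `2ε` apart. -/

theorem rankVec_congr {N : ℕ} {u v : Fin N → ℝ} (h : ∀ j k, u j < u k ↔ v j < v k) :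
    rankVec u = rankVec v := by
  funext j
  simp only [rankVec, gt_iff_lt, h]

theorem srocc_congr_left {N : ℕ} {u u' : Fin N → ℝ} (h : rankVec u = rankVec u') (v : Fin N → ℝ) :
    srocc u v = srocc u' v := by
  simp only [srocc, h]

theorem lt_iff_lt_of_injective_of_lt_imp {ι α β : Type*} [LinearOrder α] [LinearOrder β]
    {u : ι → α} {v : ι → β} (hu : Function.Injective u) (h : ∀ j k, u j < u k → v j < v k)
    (j k : ι) : u j < u k ↔ v j < v k := by
  refine ⟨h j k, fun hv => ?_⟩
  rcases lt_trichotomy (u j) (u k) with hlt | heq | hgt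
  · exact hlt
  · exact absurd hv (hu heq ▸ lt_irrefl (v j))
  · exact absurd (h k j hgt) hv.not_gt

theorem lt_of_two_mul_lt_sub_of_abs_sub_le {x y x' y' ε : ℝ} (hgap : 2 * ε < y - x)
    (hx : |x' - x| ≤ ε) (hy : |y' - y| ≤ ε) : x' < y' := by
  linarith [(abs_le.mp hx).2, (abs_le.mp hy).1]

theorem srocc_stability_general {N : ℕ} (ε : ℝ) (hε : 0 ≤ ε)
    (sStar s' : Fin N → ℝ)
    (hgap : ∀ j k : Fin N, j ≠ k → 2 * ε < |sStar j - sStar k|)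
    (hclose : ∀ j : Fin N, |s' j - sStar j| ≤ ε)
    (s : Fin N → ℝ) :
    srocc s' s = srocc sStar s := by
  have hinj : Function.Injective sStar := fun j k hjk => by
    by_contra hne
    have := hgap j k hne
    rw [hjk, sub_self, abs_zero] at this
    linarith
  have hmono : ∀ j k, sStar j < sStar k → s' j < s' k := fun j k hlt =>
    lt_of_two_mul_lt_sub_of_abs_sub_le
      (by simpa only [abs_of_pos (sub_pos.mpr hlt)] using hgap k j (ne_of_apply_ne sStar hlt.ne'))
      (hclose j) (hclose k)
  refine srocc_congr_left (rankVec_congr fun j k => ?_) s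
  exact (lt_iff_lt_of_injective_of_lt_imp hinj hmono j k).symm

/-- If the target scores `s*` have all pairwise gaps greater than `2ε` and the
predicted scores `s'` are within `ε` of `s*` coordinatewise, then for every injective
reference vector `s`, the achieved SROCC equals the ideal SROCC:
`SROCC(s', s) = SROCC(s*, s)`. -/
theorem srocc_stability {N : ℕ} (hN : 2 ≤ N) (ε : ℝ) (hε : 0 ≤ ε)
    (sStar s' : Fin N → ℝ)
    (hgap : ∀ j k : Fin N, j ≠ k → 2 * ε < |sStar j - sStar k|)
    (hclose : ∀ j : Fin N, |s' j - sStar j| ≤ ε)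
    (s : Fin N → ℝ) (hs : Function.Injective s) :
    srocc s' s = srocc sStar s :=
  srocc_stability_general ε hε sStar s' hgap hclose s
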